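/- Let H(ϑ) = H₀ + Δ̃_m(ϑ) be the fiber Schrödinger operator, where H₀ = Δ₀ + Q is independent of ϑ and 0 ≤ Δ̃_m(ϑ) ≤ 2B_m. Then the total length of the spectral bands satisfies Σ_{n=1}^{ν} (λ_n⁺ − λ_n⁻) ≤ 2 Tr B_m = 4I, where λ_n⁻ = min_ϑ λ_n(ϑ), λ_n⁺ = max_ϑ λ_n(ϑ) are the band edges, λ_n(ϑ) the eigenvalues of H(ϑ) in increasing order, and I = (1/2)#supp m. -/

import Mathlib

open Classical Finset

/-- A (multi)graph given by oriented edges. -/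
structure OGraph (V A : Type) where
  head : A → V
  tail : A → V
  rev : A → A
  rev_rev : ∀ e, rev (rev e) = e
  rev_ne : ∀ e, rev e ≠ e
  head_rev : ∀ e, head (rev e) = tail e

namespace OGraph

variable {V A : Type}

/-- `G.IsWalkFrom l u v` : the list of oriented edges `l` is a walk from `u` to `v`. -/
def IsWalkFrom (G : OGraph V A) : List A → V → V → Prop
  | [], u, v => u = v
  | e :: l, u, v => G.head e = u ∧ G.IsWalkFrom l (G.tail e) v

end OGraph

namespace OGraph

variable {V A : Type}

/-- The degree of a vertex. -/
noncomputable def deg [Fintype A] (G : OGraph V A) (v : V) : ℕ :=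
  (Finset.univ.filter (fun e => G.head e = v)).card

/-- The number of oriented edges in the support of a 1-form. -/
noncomputable def suppCard [Fintype A] {d : ℕ} (m : A → Fin d → ℝ) : ℕ :=
  (Finset.univ.filter (fun e => m e ≠ 0)).card

/-- The fiber Schrödinger operator `H(ϑ) = H₀ + Δ̃_m(ϑ)`, `H₀ = Δ₀ + Q`, as a
matrix: `Δ₀` is the Laplacian of the edges outside `supp m` (their coefficient
is `1`, independent of `ϑ`), and the edges of `supp m` carry the coefficient
`e^{i⟨m(e),ϑ⟩}` of the magnetic Laplacian `Δ̃_m(ϑ)`. -/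
noncomputable def fiberMatrix [Fintype V] [Fintype A] [DecidableEq V] {d : ℕ}
    (G : OGraph V A) (m : A → Fin d → ℝ) (Q : V → ℝ) (ϑ : Fin d → ℝ) :
    Matrix V V ℂ :=
  Matrix.of fun v u =>
    (if v = u then (((G.deg v : ℝ) + Q v : ℝ) : ℂ) else 0)
    - ∑ e ∈ Finset.univ.filter (fun e => G.head e = v ∧ G.tail e = u),
        (if m e = 0 then 1
          else Complex.exp (Complex.I * ((∑ i, m e i * ϑ i : ℝ) : ℂ)))

end OGraph

/-!
Pairing each edge of `supp m` with its reverse writes both `Δ̃_m(ϑ)` and `2 B_m - Δ̃_m(ϑ)` as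
halves of sums of rank-one Gram matrices `a aᴴ`, so both are positive semidefinite and
`H₀ ≤ H(ϑ) ≤ H₀ + 2 B_m` in the Loewner order, for every `ϑ`. Weyl's monotonicity theorem, proved
by the Courant–Fischer dimension count (the eigenvectors of the smaller matrix with index `≥ k` and
those of the larger one with index `≤ k` span subspaces of total dimension `card V + 1`, which
must meet), then traps the `n`-th band in `[λ_n(H₀), λ_n(H₀ + 2 B_m)]`. Summing over `n`, the band
lengths add up to at most `Tr (2 B_m) = 2 · #supp m`.
-/

open Matrix Module
open scoped ComplexOrder

theorem Fintype.exists_equiv_monotone_comp {n α : Type*} [Fintype n] [LinearOrder α] (f : n → α) :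
    ∃ σ : Fin (Fintype.card n) ≃ n, Monotone (f ∘ σ) := by
  let e := (Fintype.equivFin n).symm
  exact ⟨(Tuple.sort (f ∘ e)).trans e, (Tuple.monotone_sort (f ∘ e) :)⟩

namespace Matrix.IsHermitian

variable {𝕜 n : Type*} [RCLike 𝕜] [Fintype n] [DecidableEq n] {A B : Matrix n n 𝕜}

theorem re_dotProduct_mulVec_eq_sum (hA : A.IsHermitian) (x : EuclideanSpace 𝕜 n) :
    RCLike.re (star x.ofLp ⬝ᵥ A *ᵥ x.ofLp) =
      ∑ i, hA.eigenvalues i * ‖hA.eigenvectorBasis.repr x i‖ ^ 2 := by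
  let c := hA.eigenvectorBasis.repr x
  have hAx : WithLp.toLp 2 (A *ᵥ x.ofLp) =
      ∑ i, ((hA.eigenvalues i : 𝕜) * c i) • hA.eigenvectorBasis i := by
    conv_lhs => rw [← hA.eigenvectorBasis.sum_repr x]
    ext j
    simp [mulVec_sum, mulVec_smul, hA.mulVec_eigenvectorBasis, c, RCLike.real_smul_eq_coe_mul]
    exact Finset.sum_congr rfl fun i _ => by ring
  have h := hA.eigenvectorBasis.orthonormal.inner_sum c
    (fun i => (hA.eigenvalues i : 𝕜) * c i) .univ
  rw [hA.eigenvectorBasis.sum_repr, ← hAx, EuclideanSpace.inner_eq_star_dotProduct,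
    dotProduct_comm, WithLp.ofLp_toLp] at h
  rw [h, map_sum]
  refine Finset.sum_congr rfl fun i _ => ?_
  rw [mul_left_comm, RCLike.conj_mul, ← RCLike.ofReal_pow, RCLike.re_ofReal_mul, RCLike.ofReal_re]

theorem repr_eq_zero_of_mem_span (hA : A.IsHermitian) {s : Set n} {x : EuclideanSpace 𝕜 n}
    (hx : x ∈ Submodule.span 𝕜 (hA.eigenvectorBasis '' s)) {j : n} (hj : j ∉ s) :
    hA.eigenvectorBasis.repr x j = 0 := by
  have hle : Submodule.span 𝕜 (hA.eigenvectorBasis '' s) ≤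
      LinearMap.ker
        ((EuclideanSpace.proj j).toLinearMap ∘ₗ hA.eigenvectorBasis.repr.toLinearMap) := by
    rw [Submodule.span_le]
    rintro _ ⟨i, hi, rfl⟩
    simp [show j ≠ i from fun h => hj (h ▸ hi)]
  exact hle hx

theorem finrank_span_eigenvectorBasis (hA : A.IsHermitian) (s : Finset n) :
    finrank 𝕜 (Submodule.span 𝕜 (hA.eigenvectorBasis '' s)) = s.card := by
  have hli := hA.eigenvectorBasis.orthonormal.linearIndependent
  rw [← Finset.coe_image,
    finrank_span_finset_eq_card (by simpa using (hli.linearIndepOn s).id_image),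
    Finset.card_image_of_injective _ hli.injective]

theorem le_re_dotProduct_of_mem_span (hA : A.IsHermitian) {s : Set n} {c : ℝ}
    (hc : ∀ i ∈ s, c ≤ hA.eigenvalues i) {x : EuclideanSpace 𝕜 n}
    (hx : x ∈ Submodule.span 𝕜 (hA.eigenvectorBasis '' s)) :
    c * ‖x‖ ^ 2 ≤ RCLike.re (star x.ofLp ⬝ᵥ A *ᵥ x.ofLp) := by
  rw [hA.re_dotProduct_mulVec_eq_sum, ← hA.eigenvectorBasis.repr.norm_map,
    EuclideanSpace.norm_sq_eq, Finset.mul_sum]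
  refine Finset.sum_le_sum fun i _ => ?_
  by_cases hi : i ∈ s
  · exact mul_le_mul_of_nonneg_right (hc i hi) (sq_nonneg _)
  · simp [hA.repr_eq_zero_of_mem_span hx hi]

theorem re_dotProduct_le_of_mem_span (hA : A.IsHermitian) {s : Set n} {c : ℝ}
    (hc : ∀ i ∈ s, hA.eigenvalues i ≤ c) {x : EuclideanSpace 𝕜 n}
    (hx : x ∈ Submodule.span 𝕜 (hA.eigenvectorBasis '' s)) :
    RCLike.re (star x.ofLp ⬝ᵥ A *ᵥ x.ofLp) ≤ c * ‖x‖ ^ 2 := by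
  rw [hA.re_dotProduct_mulVec_eq_sum, ← hA.eigenvectorBasis.repr.norm_map,
    EuclideanSpace.norm_sq_eq, Finset.mul_sum]
  refine Finset.sum_le_sum fun i _ => ?_
  by_cases hi : i ∈ s
  · exact mul_le_mul_of_nonneg_right (hc i hi) (sq_nonneg _)
  · simp [hA.repr_eq_zero_of_mem_span hx hi]

theorem eigenvalues_le_of_posSemidef_sub (hA : A.IsHermitian) (hB : B.IsHermitian)
    (hAB : (B - A).PosSemidef) {σ τ : Fin (Fintype.card n) ≃ n}
    (hσ : Monotone (hA.eigenvalues ∘ σ)) (hτ : Monotone (hB.eigenvalues ∘ τ))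
    (k : Fin (Fintype.card n)) : hA.eigenvalues (σ k) ≤ hB.eigenvalues (τ k) := by
  set sA : Finset n := (Finset.Ici k).map σ.toEmbedding
  set sB : Finset n := (Finset.Iic k).map τ.toEmbedding
  set S := Submodule.span 𝕜 (hA.eigenvectorBasis '' sA)
  set T := Submodule.span 𝕜 (hB.eigenvectorBasis '' sB)
  obtain ⟨x, ⟨hxS, hxT⟩, hx0⟩ : ∃ x ∈ S ⊓ T, x ≠ 0 := by
    refine Submodule.exists_mem_ne_zero_of_ne_bot fun hST => ?_
    have hdim := Submodule.finrank_sup_add_finrank_inf_eq S T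
    have hsup := Submodule.finrank_le (S ⊔ T)
    rw [hST, finrank_bot, hA.finrank_span_eigenvectorBasis, hB.finrank_span_eigenvectorBasis,
      Finset.card_map, Finset.card_map, Fin.card_Ici, Fin.card_Iic] at hdim
    rw [finrank_euclideanSpace] at hsup
    omega
  have hlow := hA.le_re_dotProduct_of_mem_span (c := hA.eigenvalues (σ k)) (fun i hi => by
    obtain ⟨j, hj, rfl⟩ := Finset.mem_map.mp hi
    exact hσ (Finset.mem_Ici.mp hj)) hxS
  have hup := hB.re_dotProduct_le_of_mem_span (c := hB.eigenvalues (τ k)) (fun i hi => by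
    obtain ⟨j, hj, rfl⟩ := Finset.mem_map.mp hi
    exact hτ (Finset.mem_Iic.mp hj)) hxT
  have hmid := hAB.re_dotProduct_nonneg x.ofLp
  rw [sub_mulVec, dotProduct_sub, map_sub, sub_nonneg] at hmid
  exact le_of_mul_le_mul_right (hlow.trans (hmid.trans hup)) (by positivity)

theorem sum_eigenvalues_comp (hA : A.IsHermitian) (σ : Fin (Fintype.card n) ≃ n) :
    ∑ k, hA.eigenvalues (σ k) = RCLike.re A.trace := by
  rw [σ.sum_comp hA.eigenvalues, hA.trace_eq_sum_eigenvalues, map_sum]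
  simp

end Matrix.IsHermitian

theorem Matrix.sum_single_apply {ι m n α : Type*} [DecidableEq m] [DecidableEq n] [AddCommMonoid α]
    (s : Finset ι) (f : ι → m) (g : ι → n) (c : ι → α) (i : m) (j : n) :
    (∑ e ∈ s, single (f e) (g e) (c e)) i j = ∑ e ∈ s with f e = i ∧ g e = j, c e := by
  simp [Matrix.sum_apply, single_apply, Finset.sum_filter]

namespace OGraph

variable {V A : Type} (G : OGraph V A)

theorem tail_rev (e : A) : G.tail (G.rev e) = G.head e := by
  rw [← G.head_rev, G.rev_rev]

theorem sum_comp_rev {M : Type*} [AddCommMonoid M] {S : Finset A} (hS : ∀ e ∈ S, G.rev e ∈ S)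
    (f : A → M) : ∑ e ∈ S, f (G.rev e) = ∑ e ∈ S, f e :=
  Finset.sum_nbij' G.rev G.rev hS hS (fun e _ => G.rev_rev e) (fun e _ => G.rev_rev e)
    fun _ _ => rfl

section Laplacian

variable {𝕜 : Type*} [RCLike 𝕜] [DecidableEq V]

noncomputable def edgeMatrix (w : A → 𝕜) (e : A) : Matrix V V 𝕜 :=
  single (G.head e) (G.head e) 1 - single (G.head e) (G.tail e) (w e)

/-- With `S = supp m` and `w = phase m ϑ` this is the paper's `Δ̃_m(ϑ)`. -/
noncomputable def edgeLaplacian (S : Finset A) (w : A → 𝕜) : Matrix V V 𝕜 :=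
  ∑ e ∈ S, G.edgeMatrix w e

variable [Fintype V]

theorem posSemidef_edgeMatrix_add_rev {w : A → 𝕜} {e : A} (hw : w (G.rev e) = star (w e))
    (hw1 : w e * star (w e) = 1) :
    (G.edgeMatrix w e + G.edgeMatrix w (G.rev e)).PosSemidef := by
  have hgram : G.edgeMatrix w e + G.edgeMatrix w (G.rev e) =
      vecMulVec (Pi.single (G.head e) 1 - star (w e) • Pi.single (G.tail e) 1)
        (star (Pi.single (G.head e) 1 - star (w e) • Pi.single (G.tail e) 1)) := by
    simp only [edgeMatrix, G.head_rev, G.tail_rev, hw, star_sub, star_smul, Pi.star_single,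
      star_one, star_star, sub_vecMulVec, vecMulVec_sub, smul_vecMulVec, vecMulVec_smul,
      ← single_eq_single_vecMulVec_single, smul_sub, smul_single, hw1, smul_eq_mul, mul_one]
    abel
  exact hgram ▸ posSemidef_vecMulVec_self_star _

theorem posSemidef_edgeLaplacian {S : Finset A} (hS : ∀ e ∈ S, G.rev e ∈ S) {w : A → 𝕜}
    (hw : ∀ e ∈ S, w (G.rev e) = star (w e)) (hw1 : ∀ e ∈ S, w e * star (w e) = 1) :
    (G.edgeLaplacian S w).PosSemidef := by
  have h2 : (2 : ℝ) • G.edgeLaplacian S w =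
      ∑ e ∈ S, (G.edgeMatrix w e + G.edgeMatrix w (G.rev e)) := by
    rw [Finset.sum_add_distrib, G.sum_comp_rev hS, two_smul, edgeLaplacian]
  have hsum := posSemidef_sum S fun e he => G.posSemidef_edgeMatrix_add_rev (hw e he) (hw1 e he)
  have := hsum.smul (a := (2⁻¹ : ℝ)) (by norm_num)
  rwa [← h2, smul_smul, inv_mul_cancel₀ two_ne_zero, one_smul] at this

end Laplacian

section Fiber

variable {d : ℕ}

noncomputable def phase (m : A → Fin d → ℝ) (ϑ : Fin d → ℝ) (e : A) : ℂ :=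
  Complex.exp (Complex.I * ((∑ i, m e i * ϑ i : ℝ) : ℂ))

variable {G}

theorem phase_rev {m : A → Fin d → ℝ} (hm : ∀ e, m (G.rev e) = - m e) (ϑ : Fin d → ℝ) (e : A) :
    phase m ϑ (G.rev e) = star (phase m ϑ e) := by
  simp [phase, hm, ← Complex.exp_conj]

theorem phase_mul_star (m : A → Fin d → ℝ) (ϑ : Fin d → ℝ) (e : A) :
    phase m ϑ e * star (phase m ϑ e) = 1 := by
  simp [phase, ← Complex.exp_conj, ← Complex.exp_add]

variable [Fintype A]

noncomputable def supp (m : A → Fin d → ℝ) : Finset A := univ.filter (fun e => m e ≠ 0)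

theorem rev_mem_supp {m : A → Fin d → ℝ} (hm : ∀ e, m (G.rev e) = - m e) {e : A}
    (he : e ∈ supp m) : G.rev e ∈ supp m := by
  simpa [supp, hm] using he

variable (G) [Fintype V] [DecidableEq V]

theorem fiberMatrix_eq_diagonal_add_edgeLaplacian (m : A → Fin d → ℝ) (Q : V → ℝ) (ϑ : Fin d → ℝ) :
    G.fiberMatrix m Q ϑ = diagonal (fun v => (Q v : ℂ)) +
      G.edgeLaplacian univ (fun e => if m e = 0 then 1 else phase m ϑ e) := by
  ext v u
  rcases eq_or_ne v u with rfl | h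
  · simp [fiberMatrix, edgeLaplacian, edgeMatrix, Finset.sum_sub_distrib, Matrix.sum_single_apply,
      deg, phase]
    grind
  · have hvu : ∀ e, ¬ (G.head e = v ∧ G.head e = u) := fun e he => h (he.1.symm.trans he.2)
    simp [fiberMatrix, edgeLaplacian, edgeMatrix, Finset.sum_sub_distrib, Matrix.sum_single_apply,
      phase, h, hvu]

/-- The paper's `H₀ = Δ₀ + Q`. -/
noncomputable def baseMatrix (m : A → Fin d → ℝ) (Q : V → ℝ) : Matrix V V ℂ :=
  diagonal (fun v => (Q v : ℂ)) + G.edgeLaplacian (univ.filter (fun e => m e = 0)) 1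

/-- The paper's `B_m`. -/
noncomputable def suppDegreeMatrix (m : A → Fin d → ℝ) : Matrix V V ℂ :=
  ∑ e ∈ supp m, single (G.head e) (G.head e) 1

theorem fiberMatrix_eq_baseMatrix_add (m : A → Fin d → ℝ) (Q : V → ℝ) (ϑ : Fin d → ℝ) :
    G.fiberMatrix m Q ϑ = G.baseMatrix m Q + G.edgeLaplacian (supp m) (phase m ϑ) := by
  rw [fiberMatrix_eq_diagonal_add_edgeLaplacian, edgeLaplacian,
    ← Finset.sum_filter_add_sum_filter_not univ (fun e => m e = 0),
    baseMatrix, add_assoc, edgeLaplacian, edgeLaplacian]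
  congr 2 <;>
    exact Finset.sum_congr rfl fun e he => by simp [edgeMatrix, (Finset.mem_filter.mp he).2]

theorem baseMatrix_add_two_smul_suppDegreeMatrix (m : A → Fin d → ℝ) (Q : V → ℝ) (ϑ : Fin d → ℝ) :
    G.baseMatrix m Q + 2 • G.suppDegreeMatrix m =
      G.fiberMatrix m Q ϑ + G.edgeLaplacian (supp m) (-phase m ϑ) := by
  rw [fiberMatrix_eq_baseMatrix_add, add_assoc, edgeLaplacian, edgeLaplacian,
    ← Finset.sum_add_distrib, suppDegreeMatrix, Finset.smul_sum]
  congr 1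
  refine Finset.sum_congr rfl fun e _ => ?_
  simp only [edgeMatrix, Pi.neg_apply, ← single_neg]
  abel

theorem trace_suppDegreeMatrix (m : A → Fin d → ℝ) :
    (G.suppDegreeMatrix m).trace = suppCard m := by
  simp [suppDegreeMatrix, trace_sum, suppCard, supp]

theorem posSemidef_fiberMatrix_sub_baseMatrix {m : A → Fin d → ℝ}
    (hm : ∀ e, m (G.rev e) = - m e) (Q : V → ℝ) (ϑ : Fin d → ℝ) :
    (G.fiberMatrix m Q ϑ - G.baseMatrix m Q).PosSemidef := by
  rw [fiberMatrix_eq_baseMatrix_add, add_sub_cancel_left]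
  exact G.posSemidef_edgeLaplacian (fun _ => rev_mem_supp hm) (fun e _ => phase_rev hm ϑ e)
    (fun e _ => phase_mul_star m ϑ e)

theorem posSemidef_sub_fiberMatrix {m : A → Fin d → ℝ}
    (hm : ∀ e, m (G.rev e) = - m e) (Q : V → ℝ) (ϑ : Fin d → ℝ) :
    (G.baseMatrix m Q + 2 • G.suppDegreeMatrix m - G.fiberMatrix m Q ϑ).PosSemidef := by
  rw [baseMatrix_add_two_smul_suppDegreeMatrix _ _ _ ϑ, add_sub_cancel_left]
  exact G.posSemidef_edgeLaplacian (fun _ => rev_mem_supp hm)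
    (fun e _ => by simp [phase_rev hm]) (fun e _ => by simpa using phase_mul_star m ϑ e)

end Fiber

end OGraph

/-- Let `H(ϑ) = H₀ + Δ̃_m(ϑ)` be the fiber Schrödinger
operator, with `H₀ = Δ₀ + Q` independent of `ϑ`. If `λ_n(ϑ)` denote the
eigenvalues of `H(ϑ)` in increasing order (counted with multiplicity), then the
total length of the spectral bands satisfies
`Σ_n (λ_n⁺ − λ_n⁻) ≤ 2 Tr B_m = 4I`, where `λ_n⁻ = inf_ϑ λ_n(ϑ)`,
`λ_n⁺ = sup_ϑ λ_n(ϑ)` and `I = (1/2)·#supp m` (so `4I = 2·#supp m`). -/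
theorem sum_band_lengths_le {V A : Type} [Fintype V] [Fintype A] [DecidableEq V]
    {d : ℕ} (G : OGraph V A) {m : A → Fin d → ℝ} (hm : ∀ e, m (G.rev e) = - m e)
    (Q : V → ℝ)
    (lam : Fin (Fintype.card V) → (Fin d → ℝ) → ℝ)
    (hmono : ∀ ϑ, Monotone fun n => lam n ϑ)
    (heig : ∀ ϑ, ∃ (h : (G.fiberMatrix m Q ϑ).IsHermitian)
      (σ : Fin (Fintype.card V) ≃ V), ∀ n, lam n ϑ = h.eigenvalues (σ n)) :
    ∑ n, ((⨆ ϑ, lam n ϑ) - (⨅ ϑ, lam n ϑ)) ≤ 2 * (OGraph.suppCard m : ℝ) := by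
  have hlow := G.posSemidef_fiberMatrix_sub_baseMatrix hm Q
  have hup := G.posSemidef_sub_fiberMatrix hm Q
  obtain ⟨h0, -⟩ := heig 0
  have hbase : (G.baseMatrix m Q).IsHermitian := by
    simpa using h0.sub (hlow 0).isHermitian
  have hupper : (G.baseMatrix m Q + 2 • G.suppDegreeMatrix m).IsHermitian := by
    simpa using h0.add (hup 0).isHermitian
  obtain ⟨σ, hσ⟩ := Fintype.exists_equiv_monotone_comp hbase.eigenvalues
  obtain ⟨τ, hτ⟩ := Fintype.exists_equiv_monotone_comp hupper.eigenvalues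
  have hband : ∀ n ϑ, hbase.eigenvalues (σ n) ≤ lam n ϑ ∧ lam n ϑ ≤ hupper.eigenvalues (τ n) := by
    intro n ϑ
    obtain ⟨hϑ, ρ, hρ⟩ := heig ϑ
    have hρmono : Monotone (hϑ.eigenvalues ∘ ρ) := by
      simpa only [hρ, Function.comp_def] using hmono ϑ
    rw [hρ]
    exact ⟨hbase.eigenvalues_le_of_posSemidef_sub hϑ (hlow ϑ) hσ hρmono n,
      hϑ.eigenvalues_le_of_posSemidef_sub hupper (hup ϑ) hρmono hτ n⟩
  calc ∑ n, ((⨆ ϑ, lam n ϑ) - ⨅ ϑ, lam n ϑ)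
      ≤ ∑ n, (hupper.eigenvalues (τ n) - hbase.eigenvalues (σ n)) :=
        Finset.sum_le_sum fun n _ =>
          sub_le_sub (ciSup_le fun ϑ => (hband n ϑ).2) (le_ciInf fun ϑ => (hband n ϑ).1)
    _ = 2 * OGraph.suppCard m := by
        rw [Finset.sum_sub_distrib, hupper.sum_eigenvalues_comp, hbase.sum_eigenvalues_comp,
          trace_add, trace_smul, G.trace_suppDegreeMatrix]
        simp
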